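/- Let A be a finite algebra with congruence θ. If θ is strongly abelian (the strong term condition SA(θ,θ) holds), then for every term t and every choice of θ-classes C₁,…,Cₙ,C₀ with t(C₁×⋯×Cₙ) ⊆ C₀, there exist equivalence relations Eᵢ on Cᵢ such that for all xᵢ,yᵢ ∈ Cᵢ: t(x₁,…,xₙ) = t(y₁,…,yₙ) iff (xᵢ,yᵢ) ∈ Eᵢ for all i. -/

import Mathlib

/-!
Write `x[i ↦ u]` for `Function.update x i u`. With the parameter block empty, the strong term
condition says that whether `t` identifies two entries `u θ v` in slot `i` does not depend on
the other entries, as long as they stay in their classes; so `Eᵢ` can be read off at a base point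
`p` of the box. With the parameter block everything but `i`, it says that `t x = t y` forces
`t x = t (y[i ↦ x i])`, hence `(x i, y i) ∈ Eᵢ`. Conversely, if every `(x i, y i) ∈ Eᵢ`, one
walks from `x` to `y` changing one slot at a time without changing the value of `t`.
-/

open Function

/-- Slot `i` carries `u`/`v`, the slots in `S` carry `a`/`b`, and the remaining slots are the
parameters `c`, replaced by `d` in the first clause. -/
def StrongTermCondition {A ι : Type*} [DecidableEq ι] (θ : A → A → Prop) (t : (ι → A) → A) :
    Prop :=
  ∀ (i : ι) (S : Finset ι), i ∉ S →
    ∀ (u v : A) (a b c d : ι → A),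
      θ u v → (∀ j, θ (a j) (b j)) → (∀ j, θ (c j) (d j)) →
      ((t (fun j => if j = i then u else if j ∈ S then a j else c j) =
          t (fun j => if j = i then v else if j ∈ S then b j else c j) →
        t (fun j => if j = i then u else if j ∈ S then a j else d j) =
          t (fun j => if j = i then v else if j ∈ S then b j else d j)) ∧
       (t (fun j => if j = i then u else if j ∈ S then a j else c j) =
          t (fun j => if j = i then v else if j ∈ S then b j else c j) →
        t (fun j => if j = i then u else if j ∈ S then a j else c j) =
          t (fun j => if j = i then u else if j ∈ S then b j else c j)))

theorem eq_of_forall_update_eq {ι A B : Type*} [Fintype ι] [DecidableEq ι] {C : ι → Set A}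
    (f : (ι → A) → B) {x y : ι → A} (hx : x ∈ Set.univ.pi C) (hy : y ∈ Set.univ.pi C)
    (h : ∀ i, ∀ w ∈ Set.univ.pi C, f (update w i (x i)) = f (update w i (y i))) :
    f x = f y := by
  suffices hybrid : ∀ s : Finset ι, f x = f (s.piecewise y x) by
    simpa using hybrid Finset.univ
  intro s
  induction s using Finset.induction_on with
  | empty => simp
  | insert i s hi ih =>
    have hw : s.piecewise y x ∈ Set.univ.pi C := s.piecewise_mem_set_pi hy hx
    calc f x = f (s.piecewise y x) := ih
      _ = f (update (s.piecewise y x) i (x i)) := by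
        rw [← Finset.piecewise_eq_of_notMem s y x hi, update_eq_self]
      _ = f (update (s.piecewise y x) i (y i)) := h i _ hw
      _ = f ((insert i s).piecewise y x) := by rw [Finset.piecewise_insert]

namespace StrongTermCondition

variable {A ι : Type*} [DecidableEq ι] {θ : A → A → Prop} {t : (ι → A) → A}

theorem update_eq_update (hTC : StrongTermCondition θ t) {i : ι} {u v : A} {z w : ι → A}
    (huv : θ u v) (hzw : ∀ j, θ (z j) (w j))
    (h : t (update z i u) = t (update z i v)) : t (update w i u) = t (update w i v) := by
  have update_eq_ite (z : ι → A) (u : A) : update z i u = fun j => if j = i then u else z j :=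
    funext (update_apply z i u)
  simpa [update_eq_ite] using
    (hTC i ∅ (Finset.notMem_empty i) u v z w z w huv hzw hzw).1 (by simpa [update_eq_ite] using h)

theorem eq_update_of_eq [Fintype ι] (hTC : StrongTermCondition θ t) {x y : ι → A}
    (hxy : ∀ j, θ (x j) (y j)) (h : t x = t y) (i : ι) : t x = t (update y i (x i)) := by
  have := (hTC i (Finset.univ.erase i) (Finset.notMem_erase i _) (x i) (y i) x y x y
    (hxy i) hxy hxy).2
  have ite_eq (z : ι → A) : (fun j => if j = i then z i else if j ∈ Finset.univ.erase i
      then z j else x j) = z := funext fun j => by by_cases hj : j = i <;> simp [hj]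
  have ite_eq_update : (fun j => if j = i then x i else if j ∈ Finset.univ.erase i
      then y j else x j) = update y i (x i) := funext fun j => by
    by_cases hj : j = i <;> simp [hj]
  rw [ite_eq x, ite_eq y, ite_eq_update] at this
  exact this h

theorem apply_eq_apply_iff [Fintype ι] (hTC : StrongTermCondition θ t) {C : ι → Set A}
    (hC : ∀ j, ∀ a ∈ C j, ∀ b ∈ C j, θ a b) {p x y : ι → A} (hp : p ∈ Set.univ.pi C)
    (hx : x ∈ Set.univ.pi C) (hy : y ∈ Set.univ.pi C) :
    t x = t y ↔ ∀ j, t (update p j (x j)) = t (update p j (y j)) := by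
  have rel : ∀ {z w : ι → A}, z ∈ Set.univ.pi C → w ∈ Set.univ.pi C → ∀ j, θ (z j) (w j) :=
    fun hz hw j => hC j _ (hz j trivial) _ (hw j trivial)
  constructor
  · intro h j
    have hj : t (update y j (x j)) = t (update y j (y j)) := by
      rw [← eq_update_of_eq hTC (rel hx hy) h j, update_eq_self, h]
    exact hTC.update_eq_update (rel hx hy j) (rel hy hp) hj
  · intro h
    exact eq_of_forall_update_eq t hx hy fun j w hw =>
      hTC.update_eq_update (rel hx hy j) (rel hp hw) (h j)

end StrongTermCondition

theorem stmt16_general {A : Type*} (θ : A → A → Prop) (hθ : Equivalence θ)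
    {n : ℕ} (t : (Fin n → A) → A)
    -- the strong term condition for `t`, for every choice of a distinguished slot
    -- `i` and a block `S` of slots (the remaining slots being parameters):
    (hTC : ∀ (i : Fin n) (S : Finset (Fin n)), i ∉ S →
      ∀ (u v : A) (a b c d : Fin n → A),
        θ u v → (∀ j, θ (a j) (b j)) → (∀ j, θ (c j) (d j)) →
        ((t (fun j => if j = i then u else if j ∈ S then a j else c j) =
            t (fun j => if j = i then v else if j ∈ S then b j else c j) →
          t (fun j => if j = i then u else if j ∈ S then a j else d j) =
            t (fun j => if j = i then v else if j ∈ S then b j else d j)) ∧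
         (t (fun j => if j = i then u else if j ∈ S then a j else c j) =
            t (fun j => if j = i then v else if j ∈ S then b j else c j) →
          t (fun j => if j = i then u else if j ∈ S then a j else c j) =
            t (fun j => if j = i then u else if j ∈ S then b j else c j))))
    (C : Fin n → Set A)
    (hC : ∀ j, ∃ a : A, C j = {x | θ a x}) :
    ∃ E : Fin n → A → A → Prop,
      (∀ j, (∀ x ∈ C j, E j x x) ∧ (∀ x y : A, E j x y → E j y x) ∧
        (∀ x y w : A, E j x y → E j y w → E j x w)) ∧
      ∀ x y : Fin n → A, (∀ j, x j ∈ C j) → (∀ j, y j ∈ C j) →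
        (t x = t y ↔ ∀ j, E j (x j) (y j)) := by
  choose p hp using hC
  have hpC : p ∈ Set.univ.pi C := fun j _ => by rw [hp j]; exact hθ.refl _
  have hrel : ∀ j, ∀ a ∈ C j, ∀ b ∈ C j, θ a b := fun j a ha b hb => by
    rw [hp j] at ha hb
    exact hθ.trans (hθ.symm ha) hb
  refine ⟨fun j a b => t (update p j a) = t (update p j b),
    fun j => ⟨fun _ _ => rfl, fun _ _ => Eq.symm, fun _ _ _ => Eq.trans⟩,
    fun x y hx hy =>
      StrongTermCondition.apply_eq_apply_iff hTC hrel hpC (fun j _ => hx j) (fun j _ => hy j)⟩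

/-- If `θ` is a strongly abelian congruence of a finite algebra (the strong term
condition holds for the term operation `t`), then on any box of `θ`-classes
`C₁ × ⋯ × Cₙ` mapped by `t` into a `θ`-class `C₀`, the action of `t` is rectangular:
there are equivalence relations `Eᵢ` on the classes `Cᵢ` such that
`t x = t y ↔ ∀ i, (xᵢ, yᵢ) ∈ Eᵢ`. -/
theorem stmt16 {A : Type*} [Fintype A] (θ : A → A → Prop) (hθ : Equivalence θ)
    {n : ℕ} (t : (Fin n → A) → A)
    -- the strong term condition for `t`, for every choice of a distinguished slot
    -- `i` and a block `S` of slots (the remaining slots being parameters):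
    (hTC : ∀ (i : Fin n) (S : Finset (Fin n)), i ∉ S →
      ∀ (u v : A) (a b c d : Fin n → A),
        θ u v → (∀ j, θ (a j) (b j)) → (∀ j, θ (c j) (d j)) →
        ((t (fun j => if j = i then u else if j ∈ S then a j else c j) =
            t (fun j => if j = i then v else if j ∈ S then b j else c j) →
          t (fun j => if j = i then u else if j ∈ S then a j else d j) =
            t (fun j => if j = i then v else if j ∈ S then b j else d j)) ∧
         (t (fun j => if j = i then u else if j ∈ S then a j else c j) =
            t (fun j => if j = i then v else if j ∈ S then b j else c j) →
          t (fun j => if j = i then u else if j ∈ S then a j else c j) =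
            t (fun j => if j = i then u else if j ∈ S then b j else c j))))
    (C : Fin n → Set A) (C₀ : Set A)
    (hC : ∀ j, ∃ a : A, C j = {x | θ a x})
    (hC₀ : ∃ a : A, C₀ = {x | θ a x})
    (hmap : ∀ x : Fin n → A, (∀ j, x j ∈ C j) → t x ∈ C₀) :
    ∃ E : Fin n → A → A → Prop,
      (∀ j, (∀ x ∈ C j, E j x x) ∧ (∀ x y : A, E j x y → E j y x) ∧
        (∀ x y w : A, E j x y → E j y w → E j x w)) ∧
      ∀ x y : Fin n → A, (∀ j, x j ∈ C j) → (∀ j, y j ∈ C j) →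
        (t x = t y ↔ ∀ j, E j (x j) (y j)) :=
  stmt16_general θ hθ t hTC C hC
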